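/- Weighted Hölder interpolation bound (key inequality in the proof of Theorem 4.7): Let ς∈(0,1), p>1 and α = ς + 1/p with α∈(ς,1), let ρ>0 and κ>0 with ρ/p ≤ κ. There is a constant C, depending only on ς, p, ρ, κ, such that for every continuously differentiable B:ℝ→ℂ with finite ‖B‖_{W^{1,p}_ρ}, ‖B‖_{L^p_ρ} and ‖B‖_{C⁰_κ}, one has ‖B‖_{C^{0,ς}_κ} ≤ C( ‖B‖_{W^{1,p}_ρ}^{α} · ‖B‖_{L^p_ρ}^{1−α} + ‖B‖_{C⁰_κ} ). -/

import Mathlib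

/-!
On `[-(L+1), L+1]` the weight `w_ρ` is at least `(1+(L+1)²)^{-ρ/2}`, so the weighted norms
`N = ‖B‖_{L^p_ρ}` and `W = ‖B‖_{W^{1,p}_ρ}` control the plain `L^p` norms of `B` and `B'` there,
up to a factor `≲ L^{ρ/p} ≤ L^κ`. Hölder's inequality turns this into the Morrey bound
`|B z - B y| ≲ L^κ W |z - y|^{1-1/p}` and, averaging `B` over a window of length `t ≤ 1`, into
`|B u| ≲ L^κ (N t^{-1/p} + W t^{1-1/p})`. At the scale `t = N/W` the second bound controls
increments over distances `≥ t` and the first those over distances `≤ t`, both giving a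
Hölder-`ς` quotient `≲ L^κ W^α N^{1-α}`; the value `|B x|` itself is bounded by the weighted
sup norm.
-/

open MeasureTheory Set

/-- The weight `w_ρ(x) = (1+x²)^{-ρ/2}`. -/
noncomputable def wgt (ρ x : ℝ) : ℝ := (1 + x ^ 2) ^ (-(ρ / 2))

/-- Weighted `L^p` norm of a complex-valued function. -/
noncomputable def LpWC (ρ p : ℝ) (u : ℝ → ℂ) : ℝ :=
  (∫ x : ℝ, wgt ρ x * ‖u x‖ ^ p) ^ (1 / p)

/-- Weighted `W^{1,p}` norm of a complex-valued function. -/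
noncomputable def W1pWC (ρ p : ℝ) (u : ℝ → ℂ) : ℝ :=
  ((∫ x : ℝ, wgt ρ x * ‖u x‖ ^ p) + ∫ x : ℝ, wgt ρ x * ‖deriv u x‖ ^ p) ^ (1 / p)

/-- `‖f‖_{C^{0,η}_κ} ≤ M`, spelled out pointwise: for every `L ≥ 1`, the sum of
`sup_{[-L,L]}|f|` and the Hölder(η) seminorm on `[-L,L]` is at most `M L^κ`. -/
def HolderNormLe (η κ M : ℝ) (f : ℝ → ℂ) : Prop :=
  ∀ L : ℝ, 1 ≤ L → ∀ x ∈ Icc (-L) L, ∀ z ∈ Icc (-L) L, ∀ y ∈ Icc (-L) L, z ≠ y →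
    ‖f x‖ + ‖f z - f y‖ / |z - y| ^ η ≤ M * L ^ κ

lemma wgt_pos (ρ x : ℝ) : 0 < wgt ρ x :=
  Real.rpow_pos_of_pos (by positivity) _

lemma one_le_rpow_mul_wgt {ρ R x : ℝ} (hρ : 0 ≤ ρ) (hx : x ∈ Icc (-R) R) :
    1 ≤ (1 + R ^ 2) ^ (ρ / 2) * wgt ρ x := by
  have hR : (0 : ℝ) < 1 + R ^ 2 := by positivity
  have hxR : (1 + R ^ 2) ^ (-(ρ / 2)) ≤ wgt ρ x :=
    Real.rpow_le_rpow_of_nonpos (by positivity)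
      (by nlinarith [sq_le_sq' hx.1 hx.2]) (by linarith)
  calc (1 : ℝ) = (1 + R ^ 2) ^ (ρ / 2) * (1 + R ^ 2) ^ (-(ρ / 2)) := by
        rw [← Real.rpow_add hR, add_neg_cancel, Real.rpow_zero]
    _ ≤ (1 + R ^ 2) ^ (ρ / 2) * wgt ρ x := by gcongr

lemma one_add_sq_rpow_le {u L m γ : ℝ} (hm : 0 ≤ m) (hL : 0 ≤ L) (hγ : 0 ≤ γ)
    (hu : 1 + u ^ 2 ≤ m * L ^ 2) : (1 + u ^ 2) ^ (γ / 2) ≤ m ^ (γ / 2) * L ^ γ := by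
  calc (1 + u ^ 2) ^ (γ / 2) ≤ (m * L ^ 2) ^ (γ / 2) := by gcongr
    _ = m ^ (γ / 2) * L ^ γ := by
        rw [Real.mul_rpow hm (by positivity), ← Real.rpow_natCast, ← Real.rpow_mul hL]
        ring_nf

lemma setIntegral_le_rpow_mul_integral_wgt {ρ R : ℝ} (hρ : 0 ≤ ρ) {F : ℝ → ℝ} (hF : 0 ≤ F)
    (hint : Integrable fun x => wgt ρ x * F x) {s : Set ℝ} (hs : MeasurableSet s)
    (hsR : s ⊆ Icc (-R) R) :
    ∫ x in s, F x ≤ (1 + R ^ 2) ^ (ρ / 2) * ∫ x, wgt ρ x * F x := by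
  by_cases hFs : IntegrableOn F s
  swap
  · rw [integral_undef hFs]
    exact mul_nonneg (by positivity) (integral_nonneg fun x => mul_nonneg (wgt_pos ρ x).le (hF x))
  calc ∫ x in s, F x ≤ ∫ x in s, (1 + R ^ 2) ^ (ρ / 2) * (wgt ρ x * F x) := by
        refine setIntegral_mono_on hFs (hint.const_mul _).integrableOn hs fun x hx => ?_
        rw [← mul_assoc]
        exact le_mul_of_one_le_left (hF x) (one_le_rpow_mul_wgt hρ (hsR hx))
    _ ≤ (1 + R ^ 2) ^ (ρ / 2) * ∫ x, wgt ρ x * F x := by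
        rw [integral_const_mul]
        exact mul_le_mul_of_nonneg_left (setIntegral_le_integral hint
          (ae_of_all _ fun x => mul_nonneg (wgt_pos ρ x).le (hF x))) (by positivity)

lemma integral_Ioc_le_rpow_mul_rpow {p : ℝ} (hp : 1 < p) {f : ℝ → ℝ} (hf : Continuous f)
    (hf0 : 0 ≤ f) {a b : ℝ} (hab : a ≤ b) :
    ∫ s in Ioc a b, f s ≤ (∫ s in Ioc a b, f s ^ p) ^ (1 / p) * (b - a) ^ (1 - 1 / p) := by
  have hpq := Real.HolderConjugate.conjExponent hp
  have : IsFiniteMeasure (volume.restrict (Ioc a b)) :=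
    isFiniteMeasure_restrict.mpr measure_Ioc_lt_top.ne
  obtain ⟨C, hC⟩ := isCompact_Icc.exists_bound_of_continuousOn (hf.continuousOn (s := Icc a b))
  have hfC : ∀ᵐ s ∂(volume.restrict (Ioc a b)), ‖f s‖ ≤ C := by
    filter_upwards [ae_restrict_mem measurableSet_Ioc] with s hs
    exact hC s (Ioc_subset_Icc_self hs)
  have hHolder := integral_mul_le_Lp_mul_Lq_of_nonneg hpq (ae_of_all _ hf0)
    (ae_of_all _ fun _ => zero_le_one) (MemLp.of_bound hf.aestronglyMeasurable C hfC)
    (memLp_const (1 : ℝ))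
  rw [one_div p, hpq.one_sub_inv, ← one_div]
  simpa [Real.volume_Ioc, sub_nonneg.mpr hab] using hHolder

lemma integral_Ioc_le_rpow_mul_LpWC {ρ p R : ℝ} (hρ : 0 ≤ ρ) (hp : 1 < p) {f : ℝ → ℝ}
    (hf : Continuous f) (hf0 : 0 ≤ f) (hint : Integrable fun x => wgt ρ x * f x ^ p)
    {a b : ℝ} (hab : a ≤ b) (hsub : Ioc a b ⊆ Icc (-R) R) :
    ∫ s in Ioc a b, f s ≤
      (1 + R ^ 2) ^ (ρ / (2 * p)) * (∫ x, wgt ρ x * f x ^ p) ^ (1 / p) * (b - a) ^ (1 - 1 / p) := by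
  have hR : (0 : ℝ) ≤ 1 + R ^ 2 := by positivity
  have hfp0 : 0 ≤ fun s => f s ^ p := fun s => Real.rpow_nonneg (hf0 s) p
  refine (integral_Ioc_le_rpow_mul_rpow hp hf hf0 hab).trans ?_
  gcongr
  calc (∫ s in Ioc a b, f s ^ p) ^ (1 / p)
      ≤ ((1 + R ^ 2) ^ (ρ / 2) * ∫ x, wgt ρ x * f x ^ p) ^ (1 / p) := by
        gcongr
        · exact setIntegral_nonneg measurableSet_Ioc fun s _ => hfp0 s
        · exact setIntegral_le_rpow_mul_integral_wgt hρ hfp0 hint measurableSet_Ioc hsub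
    _ = (1 + R ^ 2) ^ (ρ / (2 * p)) * (∫ x, wgt ρ x * f x ^ p) ^ (1 / p) := by
        rw [Real.mul_rpow (by positivity)
          (integral_nonneg fun x => mul_nonneg (wgt_pos ρ x).le (hfp0 x)), ← Real.rpow_mul hR]
        congr 2
        ring

lemma norm_sub_le_integral_norm_deriv {B : ℝ → ℂ} (hB : ContDiff ℝ 1 B) {y z : ℝ} (h : y ≤ z) :
    ‖B z - B y‖ ≤ ∫ s in Ioc y z, ‖deriv B s‖ := by
  rw [← intervalIntegral.integral_of_le h, ← intervalIntegral.integral_deriv_eq_sub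
    (fun s _ => hB.differentiable one_ne_zero s)
    ((hB.continuous_deriv le_rfl).intervalIntegrable y z)]
  exact intervalIntegral.norm_integral_le_integral_norm h

lemma mul_norm_le_integral_add_mul_integral {B : ℝ → ℂ} (hB : ContDiff ℝ 1 B) {x r : ℝ}
    (hr : 0 < r) :
    r * ‖B x‖ ≤ (∫ s in Ioc (x - r) x, ‖B s‖) + r * ∫ s in Ioc (x - r) x, ‖deriv B s‖ := by
  set D := ∫ s in Ioc (x - r) x, ‖deriv B s‖
  have hD : ∀ s ∈ Ioc (x - r) x, ‖B x‖ ≤ ‖B s‖ + D := by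
    intro s hs
    have hBs : ‖B x - B s‖ ≤ D :=
      (norm_sub_le_integral_norm_deriv hB hs.2).trans <|
        setIntegral_mono_set (hB.continuous_deriv le_rfl).norm.integrableOn_Ioc
          (ae_of_all _ fun _ => norm_nonneg _)
          (Ioc_subset_Ioc_left hs.1.le).eventuallyLE
    linarith [norm_le_insert' (B x) (B s)]
  have hvol : volume.real (Ioc (x - r) x) = r := by
    rw [Real.volume_real_Ioc_of_le (by linarith)]
    ring
  have hconst : ∀ c : ℝ, IntegrableOn (fun _ => c) (Ioc (x - r) x) :=
    fun c => integrableOn_const measure_Ioc_lt_top.ne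
  calc r * ‖B x‖ = ∫ _ in Ioc (x - r) x, ‖B x‖ := by
        rw [setIntegral_const, hvol, smul_eq_mul]
    _ ≤ ∫ s in Ioc (x - r) x, (‖B s‖ + D) :=
        setIntegral_mono_on (hconst _)
          (hB.continuous.norm.integrableOn_Ioc.add (hconst _)) measurableSet_Ioc hD
    _ = (∫ s in Ioc (x - r) x, ‖B s‖) + r * D := by
        rw [integral_add hB.continuous.norm.integrableOn_Ioc (hconst _), setIntegral_const, hvol,
          smul_eq_mul]

lemma div_rpow_le_mul_rpow_sub {d D h t β ς : ℝ} (hd : 0 ≤ d) (hD : 0 ≤ D) (hh : 0 < h)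
    (ht : 0 < t) (hς : 0 ≤ ς) (hςβ : ς ≤ β) (hdh : d ≤ D * h ^ β) (hdt : d ≤ D * t ^ β) :
    d / h ^ ς ≤ D * t ^ (β - ς) := by
  have hβς : 0 ≤ β - ς := sub_nonneg.mpr hςβ
  rcases le_total h t with hht | hth
  · calc d / h ^ ς ≤ D * h ^ β / h ^ ς := by gcongr
      _ = D * h ^ (β - ς) := by rw [mul_div_assoc, ← Real.rpow_sub hh]
      _ ≤ D * t ^ (β - ς) := by gcongr
  · calc d / h ^ ς ≤ d / t ^ ς := by gcongr
      _ ≤ D * t ^ β / t ^ ς := by gcongr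
      _ = D * t ^ (β - ς) := by rw [mul_div_assoc, ← Real.rpow_sub ht]

lemma mul_div_rpow_eq {N W γ : ℝ} (hN : 0 ≤ N) (hW : 0 < W) :
    W * (N / W) ^ γ = W ^ (1 - γ) * N ^ γ := by
  rw [Real.div_rpow hN hW.le, Real.rpow_sub hW, Real.rpow_one]
  field_simp

lemma norm_le_rpow_mul_of_wgt_mul_norm_le {E : Type*} [NormedAddCommGroup E] {κ M L x : ℝ}
    {f : ℝ → E} (hκ : 0 ≤ κ) (hf : ∀ x, wgt κ x * ‖f x‖ ≤ M) (hL : 1 ≤ L)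
    (hx : x ∈ Icc (-L) L) : ‖f x‖ ≤ 2 ^ (κ / 2) * L ^ κ * M := by
  have hM : 0 ≤ M := (mul_nonneg (wgt_pos κ 0).le (norm_nonneg _)).trans (hf 0)
  calc ‖f x‖ ≤ (1 + L ^ 2) ^ (κ / 2) * wgt κ x * ‖f x‖ :=
        le_mul_of_one_le_left (norm_nonneg _) (one_le_rpow_mul_wgt hκ hx)
    _ ≤ (1 + L ^ 2) ^ (κ / 2) * M := by
        rw [mul_assoc]
        gcongr
        exact hf x
    _ ≤ 2 ^ (κ / 2) * L ^ κ * M := by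
        gcongr
        exact one_add_sq_rpow_le zero_le_two (by linarith) hκ (by nlinarith)

section WeightedNorms

variable {ρ p : ℝ} {B : ℝ → ℂ}

lemma integral_wgt_mul_norm_rpow_nonneg (u : ℝ → ℂ) : 0 ≤ ∫ x, wgt ρ x * ‖u x‖ ^ p :=
  integral_nonneg fun x => mul_nonneg (wgt_pos ρ x).le (Real.rpow_nonneg (norm_nonneg _) p)

lemma LpWC_nonneg : 0 ≤ LpWC ρ p B :=
  Real.rpow_nonneg (integral_wgt_mul_norm_rpow_nonneg B) _

lemma LpWC_le_W1pWC (hp : 0 ≤ p) : LpWC ρ p B ≤ W1pWC ρ p B :=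
  Real.rpow_le_rpow (integral_wgt_mul_norm_rpow_nonneg B)
    (le_add_of_nonneg_right (integral_wgt_mul_norm_rpow_nonneg _)) (by positivity)

lemma LpWC_deriv_le_W1pWC (hp : 0 ≤ p) : LpWC ρ p (deriv B) ≤ W1pWC ρ p B :=
  Real.rpow_le_rpow (integral_wgt_mul_norm_rpow_nonneg _)
    (le_add_of_nonneg_left (integral_wgt_mul_norm_rpow_nonneg B)) (by positivity)

lemma eq_zero_of_LpWC_eq_zero (hp : 0 < p) (hB : Continuous B)
    (hi0 : Integrable fun x => wgt ρ x * ‖B x‖ ^ p) (h : LpWC ρ p B = 0) (x : ℝ) : B x = 0 := by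
  have hcont : Continuous fun x => wgt ρ x * ‖B x‖ ^ p :=
    ((continuous_const.add (continuous_pow 2)).rpow_const fun x =>
      Or.inl (by positivity : (1 : ℝ) + x ^ 2 ≠ 0)).mul
      (hB.norm.rpow_const fun _ => Or.inr hp.le)
  have hint : ∫ x, wgt ρ x * ‖B x‖ ^ p = 0 :=
    (Real.rpow_eq_zero (integral_wgt_mul_norm_rpow_nonneg B) (one_div_ne_zero hp.ne')).mp h
  have hzero := congrFun ((hcont.ae_eq_iff_eq volume continuous_const).mp
    ((integral_eq_zero_iff_of_nonneg (fun x => mul_nonneg (wgt_pos ρ x).le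
      (Real.rpow_nonneg (norm_nonneg _) p)) hi0).mp hint)) x
  have hnorm := (mul_eq_zero.mp hzero).resolve_left (wgt_pos ρ x).ne'
  exact norm_eq_zero.mp ((Real.rpow_eq_zero (norm_nonneg _) hp.ne').mp hnorm)

variable (hρ : 0 ≤ ρ) (hp : 1 < p) (hB : ContDiff ℝ 1 B)
include hρ hp hB

lemma norm_sub_le_rpow_mul_W1pWC (hi1 : Integrable fun x => wgt ρ x * ‖deriv B x‖ ^ p)
    {R y z : ℝ} (hy : y ∈ Icc (-R) R) (hz : z ∈ Icc (-R) R) :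
    ‖B z - B y‖ ≤ (1 + R ^ 2) ^ (ρ / (2 * p)) * W1pWC ρ p B * |z - y| ^ (1 - 1 / p) := by
  wlog hyz : y ≤ z generalizing y z
  · rw [norm_sub_rev, abs_sub_comm]
    exact this hz hy (le_of_not_ge hyz)
  calc ‖B z - B y‖ ≤ ∫ s in Ioc y z, ‖deriv B s‖ := norm_sub_le_integral_norm_deriv hB hyz
    _ ≤ (1 + R ^ 2) ^ (ρ / (2 * p)) * LpWC ρ p (deriv B) * (z - y) ^ (1 - 1 / p) :=
        integral_Ioc_le_rpow_mul_LpWC hρ hp (hB.continuous_deriv le_rfl).norm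
          (fun _ => norm_nonneg _) hi1 hyz fun s hs => ⟨hy.1.trans hs.1.le, hs.2.trans hz.2⟩
    _ ≤ (1 + R ^ 2) ^ (ρ / (2 * p)) * W1pWC ρ p B * |z - y| ^ (1 - 1 / p) := by
        rw [abs_of_nonneg (sub_nonneg.mpr hyz)]
        gcongr
        exact LpWC_deriv_le_W1pWC (by linarith)

lemma mul_norm_le_rpow_mul_LpWC (hi0 : Integrable fun x => wgt ρ x * ‖B x‖ ^ p)
    (hi1 : Integrable fun x => wgt ρ x * ‖deriv B x‖ ^ p) {R u r : ℝ} (hr : 0 < r)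
    (hsub : Icc (u - r) u ⊆ Icc (-R) R) :
    r * ‖B u‖ ≤
      (1 + R ^ 2) ^ (ρ / (2 * p)) * (LpWC ρ p B + r * W1pWC ρ p B) * r ^ (1 - 1 / p) := by
  have hwin : Ioc (u - r) u ⊆ Icc (-R) R := Ioc_subset_Icc_self.trans hsub
  have hlen : u - (u - r) = r := by ring
  have hB0 := integral_Ioc_le_rpow_mul_LpWC hρ hp hB.continuous.norm
    (fun _ => norm_nonneg _) hi0 (by linarith) hwin
  have hB1 := integral_Ioc_le_rpow_mul_LpWC hρ hp (hB.continuous_deriv le_rfl).norm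
    (fun _ => norm_nonneg _) hi1 (by linarith) hwin
  rw [hlen] at hB0 hB1
  calc r * ‖B u‖ ≤ (∫ s in Ioc (u - r) u, ‖B s‖) + r * ∫ s in Ioc (u - r) u, ‖deriv B s‖ :=
        mul_norm_le_integral_add_mul_integral hB hr
    _ ≤ (1 + R ^ 2) ^ (ρ / (2 * p)) * LpWC ρ p B * r ^ (1 - 1 / p) +
          r * ((1 + R ^ 2) ^ (ρ / (2 * p)) * LpWC ρ p (deriv B) * r ^ (1 - 1 / p)) :=
        add_le_add hB0 (mul_le_mul_of_nonneg_left hB1 hr.le)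
    _ ≤ (1 + R ^ 2) ^ (ρ / (2 * p)) * LpWC ρ p B * r ^ (1 - 1 / p) +
          r * ((1 + R ^ 2) ^ (ρ / (2 * p)) * W1pWC ρ p B * r ^ (1 - 1 / p)) := by
        gcongr
        exact LpWC_deriv_le_W1pWC (by linarith)
    _ = _ := by ring

lemma norm_sub_div_rpow_le (hi0 : Integrable fun x => wgt ρ x * ‖B x‖ ^ p)
    (hi1 : Integrable fun x => wgt ρ x * ‖deriv B x‖ ^ p) {ς L y z : ℝ} (hς : 0 ≤ ς)
    (hα : ς + 1 / p ≤ 1) (hy : y ∈ Icc (-L) L) (hz : z ∈ Icc (-L) L) (hzy : z ≠ y) :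
    ‖B z - B y‖ / |z - y| ^ ς ≤ 4 * (1 + (L + 1) ^ 2) ^ (ρ / (2 * p)) *
      (W1pWC ρ p B ^ (ς + 1 / p) * LpWC ρ p B ^ (1 - (ς + 1 / p))) := by
  set c := (1 + (L + 1) ^ 2) ^ (ρ / (2 * p))
  set N := LpWC ρ p B
  set W := W1pWC ρ p B
  have hNW : N ≤ W := LpWC_le_W1pWC (by linarith)
  rcases LpWC_nonneg.eq_or_lt with hN | hN
  · have hB0 := eq_zero_of_LpWC_eq_zero (by linarith) hB.continuous hi0 hN.symm
    rw [hB0 y, hB0 z, sub_self, norm_zero, zero_div]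
    exact mul_nonneg (by positivity) (mul_nonneg (Real.rpow_nonneg (hN.le.trans hNW) _)
      (Real.rpow_nonneg hN.le _))
  have hW : 0 < W := hN.trans_le hNW
  set t := N / W
  have ht : 0 < t := div_pos hN hW
  have hsup : ∀ u ∈ Icc (-L) L, ‖B u‖ ≤ 2 * c * W * t ^ (1 - 1 / p) := by
    intro u hu
    have ht1 : t ≤ 1 := (div_le_one hW).mpr hNW
    have hwin : Icc (u - t) u ⊆ Icc (-(L + 1)) (L + 1) := fun s hs =>
      ⟨by linarith [hu.1, hs.1], by linarith [hu.2, hs.2]⟩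
    have h : t * ‖B u‖ ≤ c * (N + t * W) * t ^ (1 - 1 / p) :=
      mul_norm_le_rpow_mul_LpWC hρ hp hB hi0 hi1 ht hwin
    rw [show N = t * W from (div_mul_cancel₀ N hW.ne').symm] at h
    exact le_of_mul_le_mul_left (by linarith) ht
  have hyR : y ∈ Icc (-(L + 1)) (L + 1) := ⟨by linarith [hy.1], by linarith [hy.2]⟩
  have hzR : z ∈ Icc (-(L + 1)) (L + 1) := ⟨by linarith [hz.1], by linarith [hz.2]⟩
  calc ‖B z - B y‖ / |z - y| ^ ς ≤ 4 * c * W * t ^ (1 - 1 / p - ς) := by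
        refine div_rpow_le_mul_rpow_sub (norm_nonneg _) (by positivity)
          (abs_pos.mpr (sub_ne_zero.mpr hzy)) ht hς (by linarith) ?_ ?_
        · have hcW : 0 ≤ c * W * |z - y| ^ (1 - 1 / p) := by positivity
          linarith [norm_sub_le_rpow_mul_W1pWC hρ hp hB hi1 hyR hzR]
        · linarith [norm_sub_le (B z) (B y), hsup z hz, hsup y hy]
    _ = 4 * c * (W ^ (ς + 1 / p) * N ^ (1 - (ς + 1 / p))) := by
        rw [mul_assoc, mul_div_rpow_eq hN.le hW, show 1 - (1 - 1 / p - ς) = ς + 1 / p by ring,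
          show 1 - 1 / p - ς = 1 - (ς + 1 / p) by ring]

end WeightedNorms

theorem weighted_holder_interpolation_general
    (ς p ρ κ : ℝ) (hς : ς ∈ Ioo (0 : ℝ) 1) (hp : 1 < p)
    (hα : ς + 1 / p < 1) (hρ : 0 < ρ) (hκρ : ρ / p ≤ κ) :
    ∃ C > (0 : ℝ), ∀ B : ℝ → ℂ,
      ContDiff ℝ 1 B →
      MeasureTheory.Integrable (fun x => wgt ρ x * ‖B x‖ ^ p) →
      MeasureTheory.Integrable (fun x => wgt ρ x * ‖deriv B x‖ ^ p) →
      ∀ M₀ : ℝ, (∀ x : ℝ, (1 + x ^ 2) ^ (-(κ / 2)) * ‖B x‖ ≤ M₀) →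
        HolderNormLe ς κ
          (C * (W1pWC ρ p B ^ (ς + 1 / p) * LpWC ρ p B ^ (1 - (ς + 1 / p)) + M₀)) B := by
  have hρp : 0 ≤ ρ / p := div_nonneg hρ.le (by linarith)
  refine ⟨2 ^ (κ / 2) + 4 * 5 ^ (ρ / (2 * p)), by positivity, ?_⟩
  intro B hB hi0 hi1 M₀ hM₀ L hL x hx z hz y hy hzy
  set G := W1pWC ρ p B ^ (ς + 1 / p) * LpWC ρ p B ^ (1 - (ς + 1 / p))
  have hG : 0 ≤ G := mul_nonneg
    (Real.rpow_nonneg (LpWC_nonneg.trans (LpWC_le_W1pWC (by linarith))) _)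
    (Real.rpow_nonneg LpWC_nonneg _)
  have hM₀_nonneg : 0 ≤ M₀ := (mul_nonneg (wgt_pos κ 0).le (norm_nonneg _)).trans (hM₀ 0)
  have hc : (1 + (L + 1) ^ 2) ^ (ρ / (2 * p)) ≤ 5 ^ (ρ / (2 * p)) * L ^ κ := by
    rw [show ρ / (2 * p) = ρ / p / 2 by ring]
    calc (1 + (L + 1) ^ 2) ^ (ρ / p / 2) ≤ 5 ^ (ρ / p / 2) * L ^ (ρ / p) :=
          one_add_sq_rpow_le (by norm_num) (by linarith) hρp (by nlinarith)
      _ ≤ 5 ^ (ρ / p / 2) * L ^ κ := by gcongr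
  have hBx := norm_le_rpow_mul_of_wgt_mul_norm_le (hρp.trans hκρ) hM₀ hL hx
  have hquot := norm_sub_div_rpow_le hρ.le hp hB hi0 hi1 hς.1.le hα.le hy hz hzy
  calc ‖B x‖ + ‖B z - B y‖ / |z - y| ^ ς
      ≤ 2 ^ (κ / 2) * L ^ κ * M₀ + 4 * (5 ^ (ρ / (2 * p)) * L ^ κ) * G := by
        grw [hBx, hquot, hc]
    _ ≤ (2 ^ (κ / 2) + 4 * 5 ^ (ρ / (2 * p))) * (G + M₀) * L ^ κ := by
        have : 0 ≤ 2 ^ (κ / 2) * L ^ κ * G + 4 * 5 ^ (ρ / (2 * p)) * L ^ κ * M₀ := by positivity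
        linarith

/-- Weighted Hölder interpolation bound (key inequality in the proof of
Theorem 4.7): for `ς∈(0,1)`, `p>1`, `α = ς + 1/p < 1`, `ρ>0`, `κ>0` with
`ρ/p ≤ κ`, there is `C` such that for every `C¹` function `B` with finite norms
(`M₀` being a bound for `‖B‖_{C⁰_κ}`),
`‖B‖_{C^{0,ς}_κ} ≤ C (‖B‖_{W^{1,p}_ρ}^α ‖B‖_{L^p_ρ}^{1-α} + ‖B‖_{C⁰_κ})`. -/
theorem weighted_holder_interpolation
    (ς p ρ κ : ℝ) (hς : ς ∈ Ioo (0 : ℝ) 1) (hp : 1 < p)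
    (hα : ς + 1 / p < 1) (hρ : 0 < ρ) (hκ : 0 < κ) (hκρ : ρ / p ≤ κ) :
    ∃ C > (0 : ℝ), ∀ B : ℝ → ℂ,
      ContDiff ℝ 1 B →
      MeasureTheory.Integrable (fun x => wgt ρ x * ‖B x‖ ^ p) →
      MeasureTheory.Integrable (fun x => wgt ρ x * ‖deriv B x‖ ^ p) →
      ∀ M₀ : ℝ, (∀ x : ℝ, (1 + x ^ 2) ^ (-(κ / 2)) * ‖B x‖ ≤ M₀) →
        HolderNormLe ς κ
          (C * (W1pWC ρ p B ^ (ς + 1 / p) * LpWC ρ p B ^ (1 - (ς + 1 / p)) + M₀)) B :=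
  weighted_holder_interpolation_general ς p ρ κ hς hp hα hρ hκρ
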